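/- Let f satisfy linear growth α|ξ| ≤ f(x,ξ) ≤ β(1+|ξ|) and the recession estimate |f(x,ξ) − f^∞(x,ξ)| ≤ C(1+|ξ|^{1−q}) with 0 < q < 1. Then the perturbed function g(x,s,ξ) := f(x, P_s(ξ)) + |ξ − P_s(ξ)|, where P_s is a Lipschitz family of linear projections with operator norm at most 1, satisfies |g(x,s,ξ) − g^∞(x,s,ξ)| ≤ C''(1+|ξ|^{1−q}) for some constant C'' > 0, where g^∞ is the recession function of g in ξ. -/
import Mathlib


open MeasureTheory Filter Topology

noncomputable section

abbrev R3 := Fin 3 → ℝ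
abbrev M33 := Fin 3 → Fin 3 → ℝ

/-- The recession function `f^∞(x,ξ) = limsup_{t→∞} f(x,tξ)/t`. -/
def recession (f : R3 → M33 → ℝ) (x : R3) (ξ : M33) : ℝ :=
  Filter.limsup (fun t : ℝ => f x (t • ξ) / t) Filter.atTop

/-- The perturbed integrand `g(x,s,ξ) = f(x,P_s ξ) + |ξ - P_s ξ|`. -/
def gfun (f : R3 → M33 → ℝ) (P : R3 → M33 →ₗ[ℝ] M33) (x s : R3) (ξ : M33) : ℝ :=
  f x (P s ξ) + ‖ξ - P s ξ‖

/-- The recession function of `g` in the last variable. -/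
def grecession (f : R3 → M33 → ℝ) (P : R3 → M33 →ₗ[ℝ] M33) (x s : R3) (ξ : M33) : ℝ :=
  Filter.limsup (fun t : ℝ => gfun f P x s (t • ξ) / t) Filter.atTop

/-- If `f` has linear growth and satisfies the recession estimate
`|f(x,ξ) − f^∞(x,ξ)| ≤ C(1+|ξ|^{1−q})`, then the perturbed function
`g(x,s,ξ) = f(x,P_s ξ) + |ξ − P_s ξ|`, with `P_s` a Lipschitz family of linear projections
of norm at most 1, satisfies `|g − g^∞| ≤ C''(1+|ξ|^{1−q})` for some `C'' > 0`. -/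
theorem stmt3 (f : R3 → M33 → ℝ) (α β C q K : ℝ) (P : R3 → M33 →ₗ[ℝ] M33)
    (hα : 0 < α) (hαβ : α ≤ β) (hC : 0 < C) (hq0 : 0 < q) (hq1 : q < 1)
    (hgrowth : ∀ᵐ x ∂(volume : Measure R3), ∀ ξ : M33,
      α * ‖ξ‖ ≤ f x ξ ∧ f x ξ ≤ β * (1 + ‖ξ‖))
    (hrec : ∀ᵐ x ∂(volume : Measure R3), ∀ ξ : M33,
      |f x ξ - recession f x ξ| ≤ C * (1 + ‖ξ‖ ^ (1 - q)))
    (hproj : ∀ s : R3, (P s).comp (P s) = P s)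
    (hPnorm : ∀ (s : R3) (ξ : M33), ‖P s ξ‖ ≤ ‖ξ‖)
    (hPlip : ∀ (s s' : R3) (ξ : M33), ‖P s ξ - P s' ξ‖ ≤ K * ‖s - s'‖ * ‖ξ‖) :
    ∃ C'' > (0:ℝ), ∀ᵐ x ∂(volume : Measure R3), ∀ (s : R3) (ξ : M33),
      |gfun f P x s ξ - grecession f P x s ξ| ≤ C'' * (1 + ‖ξ‖ ^ (1 - q)) := by
  refine ⟨C, hC, ?_⟩
  filter_upwards [hgrowth, hrec] with x hg hr s ξ
  -- key: grecession = recession f x (P s ξ) + ‖ξ - P s ξ‖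
  have key : grecession f P x s ξ = recession f x (P s ξ) + ‖ξ - P s ξ‖ := by
    unfold grecession recession gfun
    have hcong : ∀ᶠ t : ℝ in atTop,
        (f x (P s (t • ξ)) + ‖t • ξ - P s (t • ξ)‖) / t
          = f x (t • P s ξ) / t + ‖ξ - P s ξ‖ := by
      filter_upwards [eventually_gt_atTop (0:ℝ)] with t ht
      rw [_root_.map_smul, ← smul_sub, norm_smul, Real.norm_of_nonneg ht.le,
        add_div, mul_div_cancel_left₀ _ ht.ne']
    rw [limsup_congr hcong]
    have hbdd : IsBoundedUnder (· ≤ ·) atTop (fun t : ℝ => f x (t • P s ξ) / t) := by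
      refine isBoundedUnder_of_eventually_le (a := β * (1 + ‖P s ξ‖)) ?_
      filter_upwards [eventually_ge_atTop (1:ℝ)] with t ht
      have ht0 : (0:ℝ) < t := lt_of_lt_of_le one_pos ht
      have := (hg (t • P s ξ)).2
      rw [norm_smul, Real.norm_of_nonneg ht0.le] at this
      rw [div_le_iff₀ ht0]
      refine this.trans ?_
      have hβ : 0 < β := lt_of_lt_of_le hα hαβ
      nlinarith [norm_nonneg (P s ξ), mul_le_mul_of_nonneg_left ht hβ.le]
    have hcobdd : IsCoboundedUnder (· ≤ ·) atTop (fun t : ℝ => f x (t • P s ξ) / t) := by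
      refine isCoboundedUnder_le_of_eventually_le atTop (x := α * ‖P s ξ‖) ?_
      filter_upwards [eventually_gt_atTop (0:ℝ)] with t ht
      have := (hg (t • P s ξ)).1
      rw [norm_smul, Real.norm_of_nonneg ht.le] at this
      rw [le_div_iff₀ ht]
      nlinarith
    exact limsup_add_const atTop _ _ hbdd hcobdd
  rw [gfun, key]
  have : f x (P s ξ) + ‖ξ - P s ξ‖ - (recession f x (P s ξ) + ‖ξ - P s ξ‖)
      = f x (P s ξ) - recession f x (P s ξ) := by ring
  rw [this]
  refine (hr (P s ξ)).trans ?_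
  have : ‖P s ξ‖ ^ (1 - q) ≤ ‖ξ‖ ^ (1 - q) :=
    Real.rpow_le_rpow (norm_nonneg _) (hPnorm s ξ) (by linarith)
  nlinarith
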